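/- arXiv:2511.12298 — 6 statements merged into one kernel-verified Lean document; each statement's English description precedes it below -/
import Mathlib

section
/- For any integer m ≥ 1, ∏_{i=1}^m (1 − cos(2πi/(2m+1))) = (2m+1)/2^m. -/
/-!
With `ζ = exp (2πi/n)` one has `2 (1 - cos (2πk/n)) = |1 - ζ^k|²`, and `∏_{0<k<n} (1 - ζ^k) = n`,
so `∏_{0<k<n} 2 (1 - cos (2πk/n)) = n²`. For `n = 2m + 1` the factors for `k` and `n - k` agree,
so this product is the square of the product over `0 < k ≤ m`, which being nonnegative equals `n`.
-/

open Finset Complex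

theorem Complex.normSq_one_sub_exp_ofReal_mul_I (θ : ℝ) :
    normSq (1 - exp (θ * I)) = 2 * (1 - Real.cos θ) := by
  rw [normSq_apply, sub_re, sub_im, one_re, one_im, exp_ofReal_mul_I_re, exp_ofReal_mul_I_im]
  linear_combination Real.sin_sq_add_cos_sq θ

theorem Finset.prod_range_two_mul_eq_sq_of_reflect {M : Type*} [CommMonoid M] (f : ℕ → M) (m : ℕ)
    (hf : ∀ k < m, f (2 * m - 1 - k) = f k) :
    ∏ k ∈ range (2 * m), f k = (∏ k ∈ range m, f k) ^ 2 := by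
  rw [two_mul, prod_range_add, sq, ← prod_range_reflect (fun k ↦ f (m + k))]
  congr 1
  refine prod_congr rfl fun k hk ↦ ?_
  have hk : k < m := mem_range.1 hk
  rw [← hf k hk]
  congr 1
  omega

theorem prod_two_mul_one_sub_cos_eq_sq (n : ℕ) :
    ∏ k ∈ range n, 2 * (1 - Real.cos (2 * Real.pi * (k + 1) / (n + 1))) = ((n : ℝ) + 1) ^ 2 := by
  have hμ : IsPrimitiveRoot (exp (2 * Real.pi * I / (n + 1))) (n + 1) := by
    exact_mod_cast isPrimitiveRoot_exp (n + 1) n.succ_ne_zero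
  have hpow (k : ℕ) : exp (2 * Real.pi * I / (n + 1)) ^ (k + 1)
      = exp ((2 * Real.pi * (k + 1) / (n + 1) : ℝ) * I) := by
    rw [← exp_nat_mul]; push_cast; ring_nf
  have := congrArg normSq hμ.prod_one_sub_pow_eq_order
  simp only [map_prod, hpow, normSq_one_sub_exp_ofReal_mul_I] at this
  rw [this, ← Nat.cast_add_one, normSq_natCast, Nat.cast_add_one, sq]

theorem prod_two_mul_one_sub_cos_odd (m : ℕ) :
    ∏ k ∈ range m, 2 * (1 - Real.cos (2 * Real.pi * (k + 1) / (2 * m + 1))) = 2 * m + 1 := by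
  set f : ℕ → ℝ := fun k ↦ 2 * (1 - Real.cos (2 * Real.pi * (k + 1) / (2 * m + 1)))
  have hsymm : ∀ k < m, f (2 * m - 1 - k) = f k := by
    intro k hk
    have hangle : 2 * Real.pi * (((2 * m - 1 - k : ℕ) : ℝ) + 1) / (2 * m + 1)
        = 2 * Real.pi - 2 * Real.pi * (k + 1) / (2 * m + 1) := by
      rw [Nat.cast_sub (by omega), Nat.cast_sub (by omega)]
      field_simp
      push_cast
      ring
    simp only [f, hangle, Real.cos_two_pi_sub]
  have hsq := prod_two_mul_one_sub_cos_eq_sq (2 * m)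
  push_cast at hsq
  rw [prod_range_two_mul_eq_sq_of_reflect f m hsymm] at hsq
  have hf_nonneg : 0 ≤ ∏ k ∈ range m, f k :=
    prod_nonneg fun k _ ↦ mul_nonneg zero_le_two (sub_nonneg.2 (Real.cos_le_one _))
  exact (pow_left_inj₀ hf_nonneg (by positivity) two_ne_zero).1 hsq

theorem prod_one_sub_cos_general (m : ℕ) :
    ∏ i ∈ Finset.Icc 1 m, (1 - Real.cos (2 * Real.pi * i / (2 * m + 1)))
    = (2 * m + 1) / 2 ^ m := by
  have h := prod_two_mul_one_sub_cos_odd m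
  rw [prod_mul_distrib, prod_const, card_range] at h
  rw [eq_div_iff (by positivity), mul_comm, ← Ico_add_one_right_eq_Icc,
    prod_Ico_eq_prod_range, Nat.add_sub_cancel]
  convert h using 6 with k
  push_cast
  ring

/-- For `m ≥ 1`, `∏_{i=1}^m (1 − cos(2πi/(2m+1))) = (2m+1)/2^m`. -/
theorem prod_one_sub_cos (m : ℕ) (hm : 1 ≤ m) :
    ∏ i ∈ Finset.Icc 1 m, (1 - Real.cos (2 * Real.pi * i / (2 * m + 1)))
    = (2 * m + 1) / 2 ^ m :=
  prod_one_sub_cos_general m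
end

section
/- Let m ≥ 1 and set α_i = 1/(1 − cos(2πi/(2m+1))) for i = 1,…,m. Then for every complex number τ, the function r_m(τ) = (1/2)(1+τ) ∏_{i=1}^m ((1−α_i) − α_i τ)^2 + (1/2)(1−τ) ∏_{i=1}^m ((1−α_i) + α_i τ)^2 equals 1/(2m+1)^2; in particular r_m is independent of τ. -/
/-!
Write `τ = (z + z⁻¹) / 2` and let `ω` be a primitive `(2m+1)`-th root of unity. Since
`2 (1 - cos (2πi/(2m+1))) = (1 - ωⁱ)(1 - ω⁻ⁱ)`, the factors of `r_m` split as
`(1 - αᵢ) ∓ αᵢ τ = ∓ (z ± ωⁱ)(z ± ω⁻ⁱ) / ((1 - ωⁱ)(1 - ω⁻ⁱ) z)`.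
Pairing `i` with `2m+1-i`, the products become `∏_{j=1}^{2m} (z ± ωʲ) = (z^{2m+1} ± 1)/(z ± 1)`
and `∏_{j=1}^{2m} (1 - ωʲ) = 2m+1`. Finally `1 ± τ = ± (z ± 1)² / (2z)`, so
`(2m+1)² z^{2m} r_m = ((z^{2m+1}+1)² - (z^{2m+1}-1)²)/(4z) = z^{2m}`.
-/

open Finset

theorem Finset.prod_Icc_mul_reflect {M : Type*} [CommMonoid M] (f : ℕ → M) (m : ℕ) :
    ∏ i ∈ Icc 1 m, f i * f (2 * m + 1 - i) = ∏ k ∈ range (2 * m), f (k + 1) := by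
  rw [prod_mul_distrib, two_mul, prod_range_add]
  congr 1
  · apply prod_nbij' (· - 1) (· + 1) <;> grind
  · apply prod_nbij' (m - ·) (m - ·) <;> grind

namespace IsPrimitiveRoot

variable {R : Type*} [CommRing R] [IsDomain R] {ω : R}

theorem sub_one_mul_prod_sub_pow {N : ℕ} (hω : IsPrimitiveRoot ω (N + 1)) (z : R) :
    (z - 1) * ∏ k ∈ range N, (z - ω ^ (k + 1)) = z ^ (N + 1) - 1 := by
  have h := congrArg (Polynomial.eval z) (X_pow_sub_C_eq_prod hω N.succ_pos (one_pow _))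
  simp only [Polynomial.eval_sub, Polynomial.eval_pow, Polynomial.eval_X, Polynomial.eval_C,
    Polynomial.eval_mul, Polynomial.eval_prod, mul_one, prod_range_succ', pow_zero] at h
  rw [h, mul_comm]

theorem add_one_mul_prod_add_pow {m : ℕ} (hω : IsPrimitiveRoot ω (2 * m + 1)) (z : R) :
    (z + 1) * ∏ k ∈ range (2 * m), (z + ω ^ (k + 1)) = z ^ (2 * m + 1) + 1 := by
  have h := hω.sub_one_mul_prod_sub_pow (-z)
  have hneg :
      ∏ k ∈ range (2 * m), (-z - ω ^ (k + 1)) = ∏ k ∈ range (2 * m), (z + ω ^ (k + 1)) := by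
    simp only [← neg_add', prod_neg, card_range, Even.neg_one_pow ⟨m, two_mul m⟩, one_mul]
  rw [hneg, Odd.neg_pow ⟨m, rfl⟩] at h
  linear_combination -h

end IsPrimitiveRoot

section Algebra

variable {R : Type*} [CommRing R] {u v z τ a : R}

theorem smoothing_factor_sub_eq (huv : u * v = 1) (hz : z ^ 2 - 2 * τ * z + 1 = 0)
    (ha : a * ((1 - u) * (1 - v)) = 2) :
    (1 - u) * (1 - v) * z * ((1 - a) - a * τ) = -((z + u) * (z + v)) := by
  linear_combination hz + (z + 1) * huv - ((1 + τ) * z) * ha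

theorem smoothing_factor_add_eq (huv : u * v = 1) (hz : z ^ 2 - 2 * τ * z + 1 = 0)
    (ha : a * ((1 - u) * (1 - v)) = 2) :
    (1 - u) * (1 - v) * z * ((1 - a) + a * τ) = (z - u) * (z - v) := by
  linear_combination -hz + (z - 1) * huv - ((1 - τ) * z) * ha

end Algebra

theorem half_mul_sq_add_half_mul_sq_eq_pow {K : Type*} [Field K] (h2 : (2 : K) ≠ 0) {N : ℕ}
    {z τ P Q : K} (hz0 : z ≠ 0) (hz : z ^ 2 - 2 * τ * z + 1 = 0)
    (hP : (z + 1) * P = z ^ (N + 1) + 1) (hQ : (z - 1) * Q = z ^ (N + 1) - 1) :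
    1 / 2 * (1 + τ) * P ^ 2 + 1 / 2 * (1 - τ) * Q ^ 2 = z ^ N := by
  refine mul_left_cancel₀ (mul_ne_zero (mul_ne_zero h2 h2) hz0) ?_
  have h2inv : 2 * (1 / 2 : K) = 1 := mul_one_div_cancel h2
  rw [pow_succ] at hP hQ
  linear_combination ((z + 1) * P + z ^ N * z + 1) * hP - ((z - 1) * Q + z ^ N * z - 1) * hQ
    + (Q ^ 2 - P ^ 2) * hz + (2 * z * (1 + τ) * P ^ 2 + 2 * z * (1 - τ) * Q ^ 2) * h2inv

theorem response_eq_inv_sq {K : Type*} [Field K] (h2 : (2 : K) ≠ 0) {m : ℕ} {ω : K}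
    (hω : IsPrimitiveRoot ω (2 * m + 1)) {α : ℕ → K}
    (hα : ∀ i ∈ Icc 1 m, α i * ((1 - ω ^ i) * (1 - ω ^ (2 * m + 1 - i))) = 2)
    {τ z : K} (hz : z ^ 2 - 2 * τ * z + 1 = 0) :
    1 / 2 * (1 + τ) * ∏ i ∈ Icc 1 m, ((1 - α i) - α i * τ) ^ 2
      + 1 / 2 * (1 - τ) * ∏ i ∈ Icc 1 m, ((1 - α i) + α i * τ) ^ 2 = 1 / (2 * m + 1) ^ 2 := by
  have hz0 : z ≠ 0 := by rintro rfl; simp at hz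
  have hn0 : (2 * m + 1 : K) ≠ 0 := by exact_mod_cast hω.neZero'.out
  have huv : ∀ i ∈ Icc 1 m, ω ^ i * ω ^ (2 * m + 1 - i) = 1 := fun i hi => by
    rw [← pow_add, Nat.add_sub_cancel' (by grind), hω.pow_eq_one]
  have hc : ∏ i ∈ Icc 1 m, (1 - ω ^ i) * (1 - ω ^ (2 * m + 1 - i)) = 2 * m + 1 := by
    rw [prod_Icc_mul_reflect (1 - ω ^ ·), hω.prod_one_sub_pow_eq_order]
    push_cast; ring
  have hprod (s g : ℕ → K) (hs : ∀ i ∈ Icc 1 m,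
      ((1 - ω ^ i) * (1 - ω ^ (2 * m + 1 - i)) * z * s i) ^ 2 = (g i * g (2 * m + 1 - i)) ^ 2) :
      (2 * m + 1) ^ 2 * z ^ (2 * m) * ∏ i ∈ Icc 1 m, s i ^ 2
        = (∏ k ∈ range (2 * m), g (k + 1)) ^ 2 := by
    rw [← prod_Icc_mul_reflect, ← prod_pow, ← prod_congr rfl hs, ← hc]
    simp only [mul_pow, prod_mul_distrib, prod_pow, prod_const, Nat.card_Icc, add_tsub_cancel_right]
    ring
  have hsub := hprod _ (z + ω ^ ·) fun i hi => by
    rw [smoothing_factor_sub_eq (huv i hi) hz (hα i hi), neg_sq]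
  have hadd := hprod _ (z - ω ^ ·) fun i hi => by
    rw [smoothing_factor_add_eq (huv i hi) hz (hα i hi)]
  have hcomb := half_mul_sq_add_half_mul_sq_eq_pow h2 hz0 hz
    (hω.add_one_mul_prod_add_pow z) (hω.sub_one_mul_prod_sub_pow z)
  rw [eq_div_iff (pow_ne_zero 2 hn0)]
  refine mul_left_cancel₀ (pow_ne_zero (2 * m) hz0) ?_
  linear_combination 1 / 2 * (1 + τ) * hsub + 1 / 2 * (1 - τ) * hadd + hcomb

namespace Complex

theorem two_mul_one_sub_cos (x : ℂ) :
    2 * (1 - cos x) = (1 - exp (x * I)) * (1 - (exp (x * I))⁻¹) := by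
  rw [mul_sub, two_cos, neg_mul, exp_neg]
  linear_combination -mul_inv_cancel₀ (exp_ne_zero (x * I))

theorem inv_one_sub_cos_mul_eq_two {m i : ℕ} (hi : i ∈ Icc 1 m) :
    (1 - (Real.cos (2 * Real.pi * i / (2 * m + 1)) : ℂ))⁻¹
      * ((1 - exp (2 * Real.pi * I / ↑(2 * m + 1)) ^ i)
        * (1 - exp (2 * Real.pi * I / ↑(2 * m + 1)) ^ (2 * m + 1 - i))) = 2 := by
  set ω := exp (2 * Real.pi * I / ↑(2 * m + 1))
  have hω : IsPrimitiveRoot ω (2 * m + 1) := isPrimitiveRoot_exp _ (by omega)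
  obtain ⟨hi1, him⟩ := mem_Icc.mp hi
  have hexp : ω ^ i = exp (↑(2 * Real.pi * i / (2 * m + 1)) * I) := by
    rw [← exp_nat_mul]
    push_cast
    ring_nf
  have hinv : ω ^ (2 * m + 1 - i) = (ω ^ i)⁻¹ :=
    eq_inv_of_mul_eq_one_left (by rw [← pow_add, Nat.sub_add_cancel (by omega), hω.pow_eq_one])
  have hne : (1 - ω ^ i) * (1 - ω ^ (2 * m + 1 - i)) ≠ 0 :=
    mul_ne_zero (sub_ne_zero.mpr (hω.pow_ne_one_of_pos_of_lt (by omega) (by omega)).symm)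
      (sub_ne_zero.mpr (hω.pow_ne_one_of_pos_of_lt (by omega) (by omega)).symm)
  rw [hinv, hexp, ← two_mul_one_sub_cos, ← ofReal_cos] at hne ⊢
  rw [mul_comm (2 : ℂ), inv_mul_cancel_left₀ (right_ne_zero_of_mul hne)]

end Complex

theorem rm_const_general (m : ℕ) (τ : ℂ)
    (α : ℕ → ℂ)
    (hα : ∀ i ∈ Finset.Icc 1 m,
      α i = (1 - (Real.cos (2 * Real.pi * i / (2 * m + 1)) : ℂ))⁻¹) :
    (1 / 2) * (1 + τ) * (∏ i ∈ Finset.Icc 1 m, ((1 - α i) - α i * τ) ^ 2)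
      + (1 / 2) * (1 - τ) * (∏ i ∈ Finset.Icc 1 m, ((1 - α i) + α i * τ) ^ 2)
    = 1 / (2 * m + 1) ^ 2 := by
  obtain ⟨s, hs⟩ := IsAlgClosed.exists_pow_nat_eq (τ ^ 2 - 1) two_pos
  refine response_eq_inv_sq two_ne_zero (Complex.isPrimitiveRoot_exp _ (by omega))
    (fun i hi => ?_) (z := τ + s) (by linear_combination hs)
  rw [hα i hi]
  exact Complex.inv_one_sub_cos_mul_eq_two hi

/-- With `α_i = 1/(1 − cos(2πi/(2m+1)))`, the scalar response
`r_m(τ) = (1/2)(1+τ)∏((1−α_i)−α_iτ)² + (1/2)(1−τ)∏((1−α_i)+α_iτ)²`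
equals `1/(2m+1)²` for every complex `τ`. -/
theorem rm_const (m : ℕ) (hm : 1 ≤ m) (τ : ℂ)
    (α : ℕ → ℂ)
    (hα : ∀ i ∈ Finset.Icc 1 m,
      α i = (1 - (Real.cos (2 * Real.pi * i / (2 * m + 1)) : ℂ))⁻¹) :
    (1 / 2) * (1 + τ) * (∏ i ∈ Finset.Icc 1 m, ((1 - α i) - α i * τ) ^ 2)
      + (1 / 2) * (1 - τ) * (∏ i ∈ Finset.Icc 1 m, ((1 - α i) + α i * τ) ^ 2)
    = 1 / (2 * m + 1) ^ 2 :=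
  rm_const_general m τ α hα
end

section
/- Let à = [[A,B],[C,D]] with A, D invertible, let T = A^{-1} B D^{-1} C, and let (w, λ) be an eigenpair of T. Set v₁ = (w, 0) and v₂ = (0, D^{-1}C w). Then for any scalar α, the smoother error operator E_s(α) = [[(1−α)I, −α A^{-1}B],[−α D^{-1}C, (1−α)I]] satisfies E_s(α) v₁ = (1−α) v₁ − α v₂ and E_s(α) v₂ = −αλ v₁ + (1−α) v₂; in particular the span of {v₁, v₂} is invariant under E_s(α). -/
open Matrix

/-- For an eigenpair `(w, λ)` of the coupling operator `T = A⁻¹BD⁻¹C`, the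
smoother error operator maps `v₁ = (w,0)` to `(1−α)v₁ − αv₂` and
`v₂ = (0, D⁻¹Cw)` to `−αλ v₁ + (1−α) v₂`; hence `span{v₁,v₂}` is invariant. -/
theorem smoother_invariant_subspace
    {n p : Type*} [Fintype n] [Fintype p] [DecidableEq n] [DecidableEq p]
    (A : Matrix n n ℂ) (B : Matrix n p ℂ) (C : Matrix p n ℂ) (D : Matrix p p ℂ)
    (hA : IsUnit A.det) (hD : IsUnit D.det)
    (w : n → ℂ) (lam : ℂ) (hw : (A⁻¹ * B * D⁻¹ * C).mulVec w = lam • w)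
    (α : ℂ) :
    let Es : Matrix (n ⊕ p) (n ⊕ p) ℂ :=
      Matrix.fromBlocks ((1 - α) • (1 : Matrix n n ℂ)) (-(α • (A⁻¹ * B)))
        (-(α • (D⁻¹ * C))) ((1 - α) • (1 : Matrix p p ℂ))
    let v₁ : (n ⊕ p) → ℂ := Sum.elim w 0
    let v₂ : (n ⊕ p) → ℂ := Sum.elim 0 ((D⁻¹ * C).mulVec w)
    Es.mulVec v₁ = (1 - α) • v₁ - α • v₂ ∧
    Es.mulVec v₂ = (-(α * lam)) • v₁ + (1 - α) • v₂ ∧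
    ∀ x ∈ Submodule.span ℂ {v₁, v₂}, Es.mulVec x ∈ Submodule.span ℂ {v₁, v₂} := by
  intro Es v₁ v₂
  have key : (A⁻¹ * B).mulVec ((D⁻¹ * C).mulVec w) = lam • w := by
    rw [mulVec_mulVec, ← Matrix.mul_assoc, hw]
  have key2 : (A⁻¹ * B * (D⁻¹ * C)).mulVec w = lam • w := by
    rw [← Matrix.mul_assoc, hw]
  have h1 : Es.mulVec v₁ = (1 - α) • v₁ - α • v₂ := by
    show Es.mulVec (Sum.elim w 0) = _
    rw [show Es = Matrix.fromBlocks ((1 - α) • (1 : Matrix n n ℂ)) (-(α • (A⁻¹ * B)))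
        (-(α • (D⁻¹ * C))) ((1 - α) • (1 : Matrix p p ℂ)) from rfl,
        fromBlocks_mulVec]
    funext i
    cases i <;>
      simp [v₁, v₂, smul_mulVec, one_mulVec, mulVec_zero, neg_mulVec, key]
  have h2 : Es.mulVec v₂ = (-(α * lam)) • v₁ + (1 - α) • v₂ := by
    show Es.mulVec (Sum.elim 0 ((D⁻¹ * C).mulVec w)) = _
    rw [show Es = Matrix.fromBlocks ((1 - α) • (1 : Matrix n n ℂ)) (-(α • (A⁻¹ * B)))
        (-(α • (D⁻¹ * C))) ((1 - α) • (1 : Matrix p p ℂ)) from rfl,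
        fromBlocks_mulVec]
    funext i
    cases i <;>
      simp [v₁, v₂, smul_mulVec, one_mulVec, mulVec_zero, neg_mulVec,
        mulVec_mulVec, key2, smul_smul]
  refine ⟨h1, h2, ?_⟩
  intro x hx
  have h₁ : v₁ ∈ Submodule.span ℂ {v₁, v₂} :=
    Submodule.subset_span (Set.mem_insert _ _)
  have h₂ : v₂ ∈ Submodule.span ℂ {v₁, v₂} :=
    Submodule.subset_span (Set.mem_insert_of_mem _ rfl)
  induction hx using Submodule.span_induction with
  | mem y hy =>
      rcases hy with rfl | rfl
      · rw [h1]; exact Submodule.sub_mem _ (Submodule.smul_mem _ _ h₁)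
          (Submodule.smul_mem _ _ h₂)
      · rw [h2]; exact Submodule.add_mem _ (Submodule.smul_mem _ _ h₁)
          (Submodule.smul_mem _ _ h₂)
  | zero => simp only [mulVec_zero]; exact Submodule.zero_mem _
  | add y z _ _ hy hz => rw [mulVec_add]; exact Submodule.add_mem _ hy hz
  | smul c y _ hy => rw [mulVec_smul]; exact Submodule.smul_mem _ _ hy
end

section
/- Let λ be a complex number with square root τ, let m ≥ 1, and let α_1,…,α_m be scalars. Define the 2×2 matrices E_i = [[1−α_i, −α_i τ],[−α_i τ, 1−α_i]], their product S = E_m ⋯ E_1, and E_c = [[1, τ],[0, 0]] = u vᵀ with u = (1,0)ᵀ, vᵀ = (1, τ). Then the nonzero eigenvalue of S E_c S equals r_m(λ) = (1/2)(1+τ) ∏_{i=1}^m ((1−α_i) − α_i τ)^2 + (1/2)(1−τ) ∏_{i=1}^m ((1−α_i) + α_i τ)^2. -/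
open Matrix Finset

private lemma prod_ofFn_E (τ : ℂ) (α : ℕ → ℂ) (m : ℕ) :
    (List.ofFn (fun i : Fin m =>
        !![1 - α (m - (i : ℕ)), -(α (m - (i : ℕ)) * τ);
           -(α (m - (i : ℕ)) * τ), 1 - α (m - (i : ℕ))])).prod =
    !![((∏ i ∈ Finset.Icc 1 m, (1 - α i - α i * τ)) +
         ∏ i ∈ Finset.Icc 1 m, (1 - α i + α i * τ)) / 2,
       ((∏ i ∈ Finset.Icc 1 m, (1 - α i - α i * τ)) -
         ∏ i ∈ Finset.Icc 1 m, (1 - α i + α i * τ)) / 2;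
       ((∏ i ∈ Finset.Icc 1 m, (1 - α i - α i * τ)) -
         ∏ i ∈ Finset.Icc 1 m, (1 - α i + α i * τ)) / 2,
       ((∏ i ∈ Finset.Icc 1 m, (1 - α i - α i * τ)) +
         ∏ i ∈ Finset.Icc 1 m, (1 - α i + α i * τ)) / 2] := by
  induction m with
  | zero =>
    simp [Finset.Icc_self]
    ext i j
    fin_cases i <;> fin_cases j <;> simp [Matrix.one_apply]
  | succ n ih =>
    rw [List.ofFn_succ]
    simp only [Fin.val_zero, Nat.sub_zero, Fin.val_succ, Nat.succ_sub_succ_eq_sub]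
    rw [List.prod_cons, ih]
    rw [Finset.prod_Icc_succ_top (Nat.le_add_left 1 n),
        Finset.prod_Icc_succ_top (Nat.le_add_left 1 n)]
    ext i j
    fin_cases i <;> fin_cases j <;>
      simp [Matrix.mul_apply, Fin.sum_univ_two] <;> ring

/-- The nonzero eigenvalue of `S E_c S`, with `S = E_m ⋯ E_1` the product of the
scaled smoother matrices and `E_c = [[1,τ],[0,0]]`, equals the scalar response
`r_m(λ) = (1/2)(1+τ)∏((1−α_i)−α_iτ)² + (1/2)(1−τ)∏((1−α_i)+α_iτ)²`. -/
theorem nonzero_eigenvalue_is_rm (m : ℕ) (hm : 1 ≤ m) (lam τ : ℂ)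
    (hτ : τ ^ 2 = lam) (α : ℕ → ℂ) :
    let E : ℕ → Matrix (Fin 2) (Fin 2) ℂ := fun i =>
      !![1 - α i, -(α i * τ); -(α i * τ), 1 - α i]
    let S : Matrix (Fin 2) (Fin 2) ℂ :=
      (List.ofFn (fun i : Fin m => E (m - (i : ℕ)))).prod
    let Ec : Matrix (Fin 2) (Fin 2) ℂ := !![1, τ; 0, 0]
    let rm : ℂ :=
      (1 / 2) * (1 + τ) * (∏ i ∈ Finset.Icc 1 m, ((1 - α i) - α i * τ) ^ 2)
        + (1 / 2) * (1 - τ) * (∏ i ∈ Finset.Icc 1 m, ((1 - α i) + α i * τ) ^ 2)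
    ∀ μ ∈ spectrum ℂ (S * Ec * S), μ = 0 ∨ μ = rm := by
  intro E S Ec rm μ hμ
  set M : ℂ := ∏ i ∈ Finset.Icc 1 m, (1 - α i - α i * τ) with hM
  set P : ℂ := ∏ i ∈ Finset.Icc 1 m, (1 - α i + α i * τ) with hP
  have hS : S = !![(M + P)/2, (M - P)/2; (M - P)/2, (M + P)/2] := by
    simpa [hM, hP] using prod_ofFn_E τ α m
  have hrm : rm = (1/2) * (1 + τ) * M ^ 2 + (1/2) * (1 - τ) * P ^ 2 := by
    simp [rm, hM, hP, Finset.prod_pow, sub_eq_add_neg]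
  have hdet : (algebraMap ℂ (Matrix (Fin 2) (Fin 2) ℂ) μ - S * Ec * S).det = 0 := by
    by_contra h
    exact spectrum.mem_iff.mp hμ ((Matrix.isUnit_iff_isUnit_det _).mpr (isUnit_iff_ne_zero.mpr h))
  rw [hS] at hdet
  have key : μ * (μ - rm) = 0 := by
    rw [hrm]
    rw [Matrix.algebraMap_eq_diagonal] at hdet
    rw [Matrix.det_fin_two] at hdet
    simp [Ec, Matrix.mul_apply, Matrix.vecMul, dotProduct,
      Fin.sum_univ_two, Matrix.diagonal_apply, Pi.algebraMap_apply] at hdet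
    rw [← hdet]
    ring
  rcases mul_eq_zero.mp key with h | h
  · exact Or.inl h
  · exact Or.inr (by linear_combination h)
end

section
/- Let m ≥ 1 and α_j = 1/(1 − cos(2πj/(2m+1))) for j = 1,…,m, and let λ be any complex number with square root τ. Define E_j = [[1−α_j, −α_j τ],[−α_j τ, 1−α_j]], S = E_m⋯E_1, and E_c = [[1, τ],[0, 0]]. Then the eigenvalues of S E_c S are exactly 0 and 1/(2m+1)^2, independent of λ. -/
/-!
Each `E_j` is a symmetric circulant matrix: it acts as `1 - α_j (1 + τ)` on `(1, 1)` and as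
`1 - α_j (1 - τ)` on `(1, -1)`. Hence `S` is the circulant with eigenvalues
`A = ∏ (1 - α_j (1 + τ))` and `B = ∏ (1 - α_j (1 - τ))`. Since `E_c` has rank one, `S E_c S` is
singular, so its spectrum is `{0, tr (S² E_c)} = {0, ((1 + τ) A² + (1 - τ) B²) / 2}`.

Write `N = 2m + 1` and `c_j = cos (2πj / N)`. Substituting `x = z + z⁻¹` and factoring over the
`N`-th roots of unity gives the Chebyshev identity `∏_{j<N} (x - 2c_j) = z^N + z^{-N} - 2`.
Comparing it with its value at `-z` (`N` is odd), and folding the product with `c_{N-j} = c_j`,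
gives `(x + 2) ∏_{j=1}^m (x + 2c_j)² - (x - 2) ∏_{j=1}^m (x - 2c_j)² = 4`. Together with
`∏_{j=1}^m (2 - 2c_j)² = ∏_{k=1}^{N-1} |1 - ζ^k|² = N²`, this is `(1 + τ) A² + (1 - τ) B² = 2 / N²`.
-/

open Matrix Finset Polynomial Real

namespace IsPrimitiveRoot

variable {K : Type*} [Field K] {n : ℕ} {ζ : K}

lemma prod_sub_pow (hζ : IsPrimitiveRoot ζ n) (hn : 0 < n) (x : K) :
    ∏ j ∈ range n, (x - ζ ^ j) = x ^ n - 1 := by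
  simpa [eval_prod] using (congrArg (eval x) (X_pow_sub_C_eq_prod hζ hn (one_pow n))).symm

lemma prod_add_inv_sub_pow_add_inv (hζ : IsPrimitiveRoot ζ n) (hn : 0 < n) {z : K}
    (hz : z ≠ 0) :
    ∏ j ∈ range n, (z + z⁻¹ - (ζ ^ j + (ζ ^ j)⁻¹)) = z ^ n + z⁻¹ ^ n - 2 := by
  have hζ₀ : ζ ≠ 0 := hζ.ne_zero hn.ne'
  -- numerator and denominator are both values of `∏ j, (x - ζ ^ j) = x ^ n - 1`
  have hfactor (j : ℕ) : z + z⁻¹ - (ζ ^ j + (ζ ^ j)⁻¹)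
      = (z - ζ ^ j) * (z⁻¹ - ζ ^ j) / (0 - ζ ^ j) := by
    field_simp
    ring
  simp only [hfactor, prod_div_distrib, prod_mul_distrib, hζ.prod_sub_pow hn,
    zero_pow hn.ne']
  have hzn : z ^ n * z⁻¹ ^ n = 1 := by rw [← mul_pow, mul_inv_cancel₀ hz, one_pow]
  linear_combination -hzn

lemma prod_two_sub_pow_add_inv {μ : K} (hμ : IsPrimitiveRoot μ (n + 1)) :
    ∏ k ∈ range n, (2 - (μ ^ (k + 1) + (μ ^ (k + 1))⁻¹)) = (n + 1) ^ 2 := by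
  have hμ₀ : μ ≠ 0 := hμ.ne_zero n.succ_ne_zero
  have hfactor (k : ℕ) : 2 - (μ ^ (k + 1) + (μ ^ (k + 1))⁻¹)
      = (1 - μ ^ (k + 1)) ^ 2 / (0 - μ ^ (k + 1)) := by
    field_simp
    ring
  have hneg : ∏ k ∈ range n, (0 - μ ^ (k + 1)) = 1 := by
    have := hμ.prod_sub_pow n.succ_pos 0
    rw [prod_range_succ'] at this
    simpa using this
  rw [prod_congr rfl fun k _ => hfactor k, prod_div_distrib, prod_pow, hneg,
    hμ.prod_one_sub_pow_eq_order, div_one]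

end IsPrimitiveRoot

lemma prod_Ico_eq_sq_prod_Icc_of_symm {M : Type*} [CommMonoid M] (m : ℕ) (f : ℕ → M)
    (hf : ∀ j ∈ Icc 1 m, f (2 * m + 1 - j) = f j) :
    ∏ j ∈ Ico 1 (2 * m + 1), f j = (∏ j ∈ Icc 1 m, f j) ^ 2 := by
  have hupper : ∏ j ∈ Ico (m + 1) (2 * m + 1), f j = ∏ j ∈ Icc 1 m, f j := by
    have hreflect := prod_Ico_reflect f 1 (show m + 1 ≤ 2 * m + 1 + 1 by omega)
    rw [show 2 * m + 1 + 1 - (m + 1) = m + 1 by omega, Nat.add_sub_cancel] at hreflect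
    rw [← hreflect, Ico_add_one_right_eq_Icc]
    exact prod_congr rfl hf
  rw [← prod_Ico_consecutive f (by omega : 1 ≤ m + 1) (by omega), hupper,
    Ico_add_one_right_eq_Icc, sq]

lemma exists_add_inv_eq {K : Type*} [Field K] [IsAlgClosed K] (x : K) :
    ∃ z : K, z ≠ 0 ∧ z + z⁻¹ = x := by
  obtain ⟨z, hroot⟩ := IsAlgClosed.exists_root (X ^ 2 - C x * X + 1 : K[X]) (by
    rw [show (X ^ 2 - C x * X + 1 : K[X]).degree = 2 by compute_degree!]
    decide)
  have hz : z * (x - z) = 1 := by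
    simp only [IsRoot, eval_add, eval_sub, eval_pow, eval_mul, eval_X, eval_C, eval_one] at hroot
    linear_combination -hroot
  refine ⟨z, left_ne_zero_of_mul_eq_one hz, ?_⟩
  rw [inv_eq_of_mul_eq_one_right hz]
  ring

noncomputable def cosNode (n j : ℕ) : ℂ := Real.cos (2 * π * j / n)

lemma two_mul_cosNode (n j : ℕ) :
    2 * cosNode n j = Complex.exp (2 * π * Complex.I / n) ^ j
      + (Complex.exp (2 * π * Complex.I / n) ^ j)⁻¹ := by
  rw [cosNode, Complex.ofReal_cos, Complex.two_cos, ← Complex.exp_nat_mul, ← Complex.exp_neg]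
  congr 1 <;> push_cast <;> ring_nf

lemma cosNode_zero (n : ℕ) : cosNode n 0 = 1 := by simp [cosNode]

lemma cosNode_self_sub {n j : ℕ} (hj : j ≤ n) : cosNode n (n - j) = cosNode n j := by
  rcases Nat.eq_zero_or_pos n with rfl | hn
  · rw [Nat.le_zero.1 hj]
  have hn' : (n : ℝ) ≠ 0 := by positivity
  rw [cosNode, cosNode, Nat.cast_sub hj, ← Real.cos_two_pi_sub]
  congr 2
  field_simp
  ring

lemma prod_add_inv_sub_two_mul_cosNode {n : ℕ} (hn : 0 < n) {z : ℂ} (hz : z ≠ 0) :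
    ∏ j ∈ range n, (z + z⁻¹ - 2 * cosNode n j) = z ^ n + z⁻¹ ^ n - 2 := by
  simp only [two_mul_cosNode]
  exact (Complex.isPrimitiveRoot_exp n hn.ne').prod_add_inv_sub_pow_add_inv hn hz

lemma prod_Ico_two_sub_two_mul_cosNode (n : ℕ) :
    ∏ j ∈ Ico 1 (n + 1), (2 - 2 * cosNode (n + 1) j) = ((n + 1 : ℕ) : ℂ) ^ 2 := by
  rw [prod_Ico_eq_prod_range, Nat.add_sub_cancel]
  simp only [two_mul_cosNode, add_comm 1]
  exact_mod_cast (Complex.isPrimitiveRoot_exp (n + 1) n.succ_ne_zero).prod_two_sub_pow_add_inv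



lemma prod_range_eq_mul_sq_prod_Icc {M : Type*} [CommMonoid M] (m : ℕ) (g : ℂ → M) :
    ∏ j ∈ range (2 * m + 1), g (cosNode (2 * m + 1) j)
      = g 1 * (∏ j ∈ Icc 1 m, g (cosNode (2 * m + 1) j)) ^ 2 := by
  rw [range_eq_Ico, prod_eq_prod_Ico_succ_bot (by omega), cosNode_zero,
    prod_Ico_eq_sq_prod_Icc_of_symm m _ fun j hj => by
      rw [cosNode_self_sub (by simp at hj; omega)]]

lemma prod_add_two_mul_cosNode_sub_prod_sub (m : ℕ) (x : ℂ) :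
    ∏ j ∈ range (2 * m + 1), (x + 2 * cosNode (2 * m + 1) j)
      - ∏ j ∈ range (2 * m + 1), (x - 2 * cosNode (2 * m + 1) j) = 4 := by
  obtain ⟨z, hz, rfl⟩ := exists_add_inv_eq x
  have hodd : Odd (2 * m + 1) := odd_two_mul_add_one m
  have hminus := prod_add_inv_sub_two_mul_cosNode (by omega : 0 < 2 * m + 1) hz
  have hplus := prod_add_inv_sub_two_mul_cosNode (by omega : 0 < 2 * m + 1) (neg_ne_zero.2 hz)
  rw [inv_neg, hodd.neg_pow, hodd.neg_pow, ← neg_add,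
    prod_congr rfl fun j _ => (neg_add' (z + z⁻¹) _).symm,
    prod_neg, card_range, hodd.neg_one_pow] at hplus
  linear_combination -hminus - hplus

lemma add_two_mul_sq_prod_Icc_sub (m : ℕ) (x : ℂ) :
    (x + 2) * (∏ j ∈ Icc 1 m, (x + 2 * cosNode (2 * m + 1) j)) ^ 2
      - (x - 2) * (∏ j ∈ Icc 1 m, (x - 2 * cosNode (2 * m + 1) j)) ^ 2 = 4 := by
  have hplus := prod_range_eq_mul_sq_prod_Icc m fun c => x + 2 * c
  have hminus := prod_range_eq_mul_sq_prod_Icc m fun c => x - 2 * c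
  simp only [mul_one] at hplus hminus
  rw [← hplus, ← hminus, prod_add_two_mul_cosNode_sub_prod_sub]

lemma sq_prod_Icc_two_sub_two_mul_cosNode (m : ℕ) :
    (∏ j ∈ Icc 1 m, (2 - 2 * cosNode (2 * m + 1) j)) ^ 2 = (2 * m + 1) ^ 2 := by
  rw [← prod_Ico_eq_sq_prod_Icc_of_symm m _ fun j hj => by
      rw [cosNode_self_sub (by simp at hj; omega)],
    prod_Ico_two_sub_two_mul_cosNode (2 * m)]
  push_cast
  ring

lemma one_add_mul_sq_prod_add_one_sub_mul_sq_prod (m : ℕ) (τ : ℂ) (α : ℕ → ℂ)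
    (hα : ∀ j ∈ Icc 1 m, α j = (1 - cosNode (2 * m + 1) j)⁻¹) :
    (1 + τ) * (∏ j ∈ Icc 1 m, (1 - α j * (1 + τ))) ^ 2
      + (1 - τ) * (∏ j ∈ Icc 1 m, (1 - α j * (1 - τ))) ^ 2 = 2 / (2 * m + 1) ^ 2 := by
  have key := add_two_mul_sq_prod_Icc_sub m (2 * τ)
  set c := cosNode (2 * m + 1)
  set D := ∏ j ∈ Icc 1 m, (2 - 2 * c j)
  have hD : D ^ 2 = (2 * m + 1) ^ 2 := sq_prod_Icc_two_sub_two_mul_cosNode m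
  have hN : (2 * m + 1 : ℂ) ≠ 0 := by exact_mod_cast (2 * m).succ_ne_zero
  have hD₀ : D ≠ 0 := fun h => hN (by simpa [h] using hD.symm)
  have hnode (j) (hj : j ∈ Icc 1 m) : 1 - c j ≠ 0 := fun h =>
    prod_ne_zero_iff.1 hD₀ j hj (by linear_combination 2 * h)
  have hplus (j) (hj : j ∈ Icc 1 m) :
      (1 - α j * (1 + τ)) ^ 2 = (2 * τ + 2 * c j) ^ 2 / (2 - 2 * c j) ^ 2 := by
    rw [hα j hj]
    field_simp [hnode j hj]
    ring
  have hminus (j) (hj : j ∈ Icc 1 m) :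
      (1 - α j * (1 - τ)) ^ 2 = (2 * τ - 2 * c j) ^ 2 / (2 - 2 * c j) ^ 2 := by
    rw [hα j hj]
    field_simp [hnode j hj]
    ring
  rw [← prod_pow, ← prod_pow, prod_congr rfl hplus, prod_congr rfl hminus, prod_div_distrib,
    prod_div_distrib, prod_pow, prod_pow, prod_pow, hD, mul_div_assoc', mul_div_assoc', ← add_div]
  congr 1
  linear_combination key / 2

section TwoByTwo

variable {K : Type*} [Field K]

lemma spectrum_eq_zero_trace_of_det_eq_zero {M : Matrix (Fin 2) (Fin 2) K} (h : M.det = 0) :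
    spectrum K M = {0, M.trace} := by
  ext x
  simp only [mem_spectrum_iff_isRoot_charpoly, charpoly_fin_two, h, IsRoot, eval_add, eval_sub,
    eval_pow, eval_mul, eval_X, eval_C, add_zero, Set.mem_insert_iff, Set.mem_singleton_iff]
  rw [sq, ← sub_mul, mul_eq_zero, sub_eq_zero, or_comm]

variable [NeZero (2 : K)]

/-- The symmetric circulant matrix with eigenvalue `a` on `(1, 1)` and `b` on `(1, -1)`. -/
def circulantOfEigenvalues : K × K →* Matrix (Fin 2) (Fin 2) K where
  toFun p := !![(p.1 + p.2) / 2, (p.1 - p.2) / 2; (p.1 - p.2) / 2, (p.1 + p.2) / 2]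
  map_one' := by
    ext i j
    fin_cases i <;> fin_cases j <;> simp
  map_mul' p q := by
    ext i j
    fin_cases i <;> fin_cases j <;> simp <;> field_simp <;> ring

lemma trace_circulantOfEigenvalues_mul (τ a b : K) :
    trace (circulantOfEigenvalues (a, b) * !![1, τ; 0, 0]) = ((1 + τ) * a + (1 - τ) * b) / 2 := by
  simp [circulantOfEigenvalues, trace_fin_two]
  ring

end TwoByTwo

lemma MonoidHom.prod_ofFn_rev_eq_map_prod_Icc {M N : Type*} [CommMonoid M] [Monoid N]
    (φ : M →* N) (g : ℕ → M) (m : ℕ) :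
    (List.ofFn fun i : Fin m => φ (g (m - i))).prod = φ (∏ j ∈ Icc 1 m, g j) := by
  rw [← Function.comp_def φ, ← List.map_ofFn, ← map_list_prod, List.prod_ofFn,
    Fin.prod_univ_eq_prod_range (fun i => g (m - i))]
  congr 1
  exact prod_nbij' (fun i => m - i) (fun j => m - j) (by simp; omega) (by simp; omega)
    (by simp; omega) (by simp; omega) (by simp)

theorem clustered_block_spectrum_general (m : ℕ) (τ : ℂ) (α : ℕ → ℂ)
    (hα : ∀ j ∈ Finset.Icc 1 m,
      α j = (1 - (Real.cos (2 * Real.pi * j / (2 * m + 1)) : ℂ))⁻¹) :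
    let E : ℕ → Matrix (Fin 2) (Fin 2) ℂ := fun j =>
      !![1 - α j, -(α j * τ); -(α j * τ), 1 - α j]
    let S : Matrix (Fin 2) (Fin 2) ℂ :=
      (List.ofFn (fun i : Fin m => E (m - (i : ℕ)))).prod
    let Ec : Matrix (Fin 2) (Fin 2) ℂ := !![1, τ; 0, 0]
    spectrum ℂ (S * Ec * S) = {0, 1 / ((2 * (m : ℂ) + 1) ^ 2)} := by
  intro E S Ec
  have hE (j : ℕ) :
      E j = circulantOfEigenvalues (1 - α j * (1 + τ), 1 - α j * (1 - τ)) := by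
    ext i k
    fin_cases i <;> fin_cases k <;> simp [E, circulantOfEigenvalues] <;> ring
  have hS : S = circulantOfEigenvalues
      (∏ j ∈ Icc 1 m, (1 - α j * (1 + τ)), ∏ j ∈ Icc 1 m, (1 - α j * (1 - τ))) := by
    simp only [S, hE, prod_mk_prod]
    exact circulantOfEigenvalues.prod_ofFn_rev_eq_map_prod_Icc
      (fun j => (1 - α j * (1 + τ), 1 - α j * (1 - τ))) m
  have hα' (j : ℕ) (hj : j ∈ Icc 1 m) : α j = (1 - cosNode (2 * m + 1) j)⁻¹ := by
    rw [hα j hj, cosNode]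
    push_cast
    rfl
  have hdet : (S * Ec * S).det = 0 := by simp [Ec, det_fin_two_of]
  have htrace : (S * Ec * S).trace = 1 / (2 * m + 1) ^ 2 := by
    rw [trace_mul_cycle, hS, ← map_mul, Prod.mk_mul_mk, trace_circulantOfEigenvalues_mul, ← sq,
      ← sq, one_add_mul_sq_prod_add_one_sub_mul_sq_prod m τ α hα']
    ring
  rw [spectrum_eq_zero_trace_of_det_eq_zero hdet, htrace]

/-- With the closed-form relaxation parameters `α_j = 1/(1 − cos(2πj/(2m+1)))`,
the eigenvalues of `S E_c S` are exactly `0` and `1/(2m+1)²`, independent of `λ`. -/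
theorem clustered_block_spectrum (m : ℕ) (hm : 1 ≤ m) (lam τ : ℂ)
    (hτ : τ ^ 2 = lam) (α : ℕ → ℂ)
    (hα : ∀ j ∈ Finset.Icc 1 m,
      α j = (1 - (Real.cos (2 * Real.pi * j / (2 * m + 1)) : ℂ))⁻¹) :
    let E : ℕ → Matrix (Fin 2) (Fin 2) ℂ := fun j =>
      !![1 - α j, -(α j * τ); -(α j * τ), 1 - α j]
    let S : Matrix (Fin 2) (Fin 2) ℂ :=
      (List.ofFn (fun i : Fin m => E (m - (i : ℕ)))).prod
    let Ec : Matrix (Fin 2) (Fin 2) ℂ := !![1, τ; 0, 0]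
    spectrum ℂ (S * Ec * S) = {0, 1 / ((2 * (m : ℂ) + 1) ^ 2)} :=
  clustered_block_spectrum_general m τ α hα
end

section
/- For m = 1, the choice α = 2/3 in the symmetric two-level method yields a preconditioned operator M^{-1}Ã whose spectrum is contained in {1, 8/9}; consequently its minimal polynomial divides (x−1)(x−8/9), and GMRES applied to M^{-1}Ã converges in at most two iterations. -/
/-!
Write `S⁻¹Ã = 1 + N` with `N = [[0, A⁻¹B], [D⁻¹C, 0]]`. With the ideal transfers the coarse-grid
correction `E_c` is the projector `π = [[1, A⁻¹B], [0, 0]]`, and `π N π = π N²`. For the smoother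
`E_s = 1 - (2/3)(1 + N)` these give `π E_s² π = π / 9`, so `Y = E_s π E_s` satisfies `Y² = Y / 9`
and `M = 1 - Y` is annihilated by `(x - 1)(x - 8/9)`. The spectrum, the minimal polynomial and the
two-step Krylov property all follow from this quadratic relation.
-/

open Matrix Polynomial

section Blocks

variable {n p 𝕜 : Type*} [Fintype n] [Fintype p] [DecidableEq n] [DecidableEq p] [CommRing 𝕜]

noncomputable def idealProlongation (A : Matrix n n 𝕜) (B : Matrix n p 𝕜) : Matrix (n ⊕ p) p 𝕜 :=
  Matrix.fromRows (-(A⁻¹ * B)) 1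

noncomputable def idealRestriction (A : Matrix n n 𝕜) (C : Matrix p n 𝕜) : Matrix p (n ⊕ p) 𝕜 :=
  Matrix.fromCols (-(C * A⁻¹)) 1

theorem fromBlocks_inv_mul_fromBlocks {A : Matrix n n 𝕜} {D : Matrix p p 𝕜} (hA : IsUnit A.det)
    (hD : IsUnit D.det) (B : Matrix n p 𝕜) (C : Matrix p n 𝕜) :
    fromBlocks A⁻¹ 0 0 D⁻¹ * fromBlocks A B C D = 1 + fromBlocks 0 (A⁻¹ * B) (D⁻¹ * C) 0 := by
  rw [fromBlocks_multiply, ← fromBlocks_one, fromBlocks_add]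
  simp [nonsing_inv_mul _ hA, nonsing_inv_mul _ hD]

theorem idealRestriction_mul_fromBlocks {A : Matrix n n 𝕜} (hA : IsUnit A.det)
    (B : Matrix n p 𝕜) (C : Matrix p n 𝕜) (D : Matrix p p 𝕜) :
    idealRestriction A C * fromBlocks A B C D = Matrix.fromCols 0 (D - C * A⁻¹ * B) := by
  rw [idealRestriction, fromCols_mul_fromBlocks]
  simp [Matrix.mul_assoc, nonsing_inv_mul _ hA, neg_add_eq_sub]

theorem idealRestriction_mul_fromBlocks_mul_idealProlongation {A : Matrix n n 𝕜}
    (hA : IsUnit A.det) (B : Matrix n p 𝕜) (C : Matrix p n 𝕜) (D : Matrix p p 𝕜) :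
    idealRestriction A C * fromBlocks A B C D * idealProlongation A B = D - C * A⁻¹ * B := by
  rw [idealRestriction_mul_fromBlocks hA, idealProlongation, fromCols_mul_fromRows]
  simp

theorem one_sub_coarseCorrection_eq {A : Matrix n n 𝕜} (hA : IsUnit A.det)
    (B : Matrix n p 𝕜) (C : Matrix p n 𝕜) (D : Matrix p p 𝕜)
    (hS : IsUnit (D - C * A⁻¹ * B).det) :
    1 - idealProlongation A B *
        (idealRestriction A C * fromBlocks A B C D * idealProlongation A B)⁻¹ *
        idealRestriction A C * fromBlocks A B C D =
      fromBlocks 1 (A⁻¹ * B) 0 0 := by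
  rw [idealRestriction_mul_fromBlocks_mul_idealProlongation hA, Matrix.mul_assoc,
    idealRestriction_mul_fromBlocks hA, idealProlongation, fromRows_mul, fromRows_mul_fromCols,
    ← fromBlocks_one, sub_eq_add_neg, fromBlocks_neg, fromBlocks_add]
  simp [Matrix.mul_assoc _ _ (D - C * A⁻¹ * B), nonsing_inv_mul _ hS]

theorem isIdempotentElem_fromBlocks_one_zero (F : Matrix n p 𝕜) :
    IsIdempotentElem (fromBlocks (1 : Matrix n n 𝕜) F 0 (0 : Matrix p p 𝕜)) := by
  simp [IsIdempotentElem, fromBlocks_multiply]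

theorem fromBlocks_one_zero_mul_mul_eq (F : Matrix n p 𝕜) (G : Matrix p n 𝕜) :
    fromBlocks (1 : Matrix n n 𝕜) F 0 (0 : Matrix p p 𝕜) * fromBlocks 0 F G 0 *
        fromBlocks 1 F 0 0 =
      fromBlocks 1 F 0 0 * fromBlocks 0 F G 0 * fromBlocks 0 F G 0 := by
  simp [fromBlocks_multiply, Matrix.mul_assoc]

end Blocks

section Algebra

variable {𝕜 R : Type*} [Field 𝕜] [Ring R] [Algebra 𝕜 R]

theorem mul_self_sandwich_eq_smul {π E : R} {c : 𝕜} (h : π * E * E * π = c • π) :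
    (E * π * E) * (E * π * E) = c • (E * π * E) := by
  calc (E * π * E) * (E * π * E) = E * (π * E * E * π) * E := by noncomm_ring
    _ = c • (E * π * E) := by rw [h, mul_smul_comm, smul_mul_assoc, mul_assoc]

/- For `E = 1 - α (1 + N)` one has `π E² π = (1 - α)² π + (3α² - 2α) π N π`; `α = 2/3` is the
nonzero root of the second coefficient. -/
theorem IsIdempotentElem.mul_smoother_mul_smoother_mul [CharZero 𝕜] {π N : R}
    (hπ : IsIdempotentElem π) (hN : π * N * π = π * N * N) :
    π * (1 - (2 / 3 : 𝕜) • (1 + N)) * (1 - (2 / 3 : 𝕜) • (1 + N)) * π = (1 / 9 : 𝕜) • π := by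
  have hNN : π * N * N * π = π * N * π := by rw [← hN, mul_assoc _ π, hπ.eq]
  simp only [mul_add, add_mul, mul_sub, sub_mul, smul_mul_assoc, mul_smul_comm, mul_one,
    smul_add, smul_sub, smul_smul, hNN, hπ.eq]
  module

theorem aeval_one_sub_eq_zero_of_mul_self_eq_smul {Y : R} {c : 𝕜} (h : Y * Y = c • Y) :
    aeval (1 - Y) ((X - C 1) * (X - C (1 - c))) = 0 := by
  simp only [map_mul, map_sub, aeval_X, aeval_C, map_one, Algebra.algebraMap_eq_smul_one]
  calc _ = Y * Y - c • Y := by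
        simp only [mul_sub, sub_mul, mul_smul_comm, mul_one, one_mul]; module
    _ = 0 := by rw [h, sub_self]

theorem spectrum_subset_pair_of_aeval_eq_zero {a : R} {x y : 𝕜}
    (h : aeval a ((X - C x) * (X - C y)) = 0) : spectrum 𝕜 a ⊆ {x, y} := by
  rcases subsingleton_or_nontrivial R with hR | hR
  · simp [spectrum.of_subsingleton]
  intro k hk
  have := spectrum.subset_polynomial_aeval a ((X - C x) * (X - C y)) ⟨k, hk, rfl⟩
  rw [h, spectrum.zero_eq, Set.mem_singleton_iff] at this
  simpa [sub_eq_zero] using this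

end Algebra

theorem Matrix.mem_span_pair_of_aeval_eq_zero {ι 𝕜 : Type*} [Fintype ι] [DecidableEq ι] [Field 𝕜]
    {M : Matrix ι ι 𝕜} {x y : 𝕜} (hx : x ≠ 0) (hy : y ≠ 0)
    (h : aeval M ((X - C x) * (X - C y)) = 0) {v w : ι → 𝕜} (hv : M *ᵥ v = w) :
    v ∈ Submodule.span 𝕜 {w, M *ᵥ w} := by
  have hzero := congrArg (· *ᵥ v) h
  simp only [map_mul, map_sub, aeval_X, aeval_C, Algebra.algebraMap_eq_smul_one, ← mulVec_mulVec,
    sub_mulVec, hv, smul_mulVec, one_mulVec, zero_mulVec, mulVec_sub, mulVec_smul] at hzero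
  have hxy : (x * y) • v = (x + y) • w - M *ᵥ w := by linear_combination (norm := module) hzero
  rw [Submodule.mem_span_pair]
  refine ⟨(x * y)⁻¹ * (x + y), -(x * y)⁻¹, ?_⟩
  rw [mul_smul, neg_smul, ← smul_neg, ← smul_add, ← sub_eq_add_neg, ← hxy, smul_smul,
    inv_mul_cancel₀ (mul_ne_zero hx hy), one_smul]

theorem two_level_m1_direct_general
    {n p : Type*} [Fintype n] [Fintype p] [DecidableEq n] [DecidableEq p]
    (A : Matrix n n ℂ) (B : Matrix n p ℂ) (C : Matrix p n ℂ) (D : Matrix p p ℂ)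
    (hA : IsUnit A.det) (hD : IsUnit D.det)
    (hM₀ : IsUnit (Matrix.fromCols (-(C * A⁻¹)) (1 : Matrix p p ℂ) *
        Matrix.fromBlocks A B C D *
        Matrix.fromRows (-(A⁻¹ * B)) (1 : Matrix p p ℂ)).det) :
    let Atil : Matrix (n ⊕ p) (n ⊕ p) ℂ := Matrix.fromBlocks A B C D
    let Sinv : Matrix (n ⊕ p) (n ⊕ p) ℂ := Matrix.fromBlocks A⁻¹ 0 0 D⁻¹
    let P : Matrix (n ⊕ p) p ℂ := Matrix.fromRows (-(A⁻¹ * B)) (1 : Matrix p p ℂ)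
    let R : Matrix p (n ⊕ p) ℂ := Matrix.fromCols (-(C * A⁻¹)) (1 : Matrix p p ℂ)
    let M₀ : Matrix p p ℂ := R * Atil * P
    let Es : Matrix (n ⊕ p) (n ⊕ p) ℂ :=
      (1 : Matrix (n ⊕ p) (n ⊕ p) ℂ) - (2 / 3 : ℂ) • (Sinv * Atil)
    let Ec : Matrix (n ⊕ p) (n ⊕ p) ℂ :=
      (1 : Matrix (n ⊕ p) (n ⊕ p) ℂ) - P * M₀⁻¹ * R * Atil
    let M : Matrix (n ⊕ p) (n ⊕ p) ℂ :=
      (1 : Matrix (n ⊕ p) (n ⊕ p) ℂ) - Es * Ec * Es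
    spectrum ℂ M ⊆ {1, (8 / 9 : ℂ)} ∧
    minpoly ℂ M ∣ (X - Polynomial.C 1) * (X - Polynomial.C (8 / 9 : ℂ)) ∧
    ∀ b x : (n ⊕ p) → ℂ, M.mulVec x = b →
      x ∈ Submodule.span ℂ {b, M.mulVec b} := by
  intro Atil Sinv P R M₀ Es Ec M
  have hEs : Es = 1 - (2 / 3 : ℂ) • (1 + fromBlocks 0 (A⁻¹ * B) (D⁻¹ * C) 0) := by
    rw [← fromBlocks_inv_mul_fromBlocks hA hD]
  have hEc : Ec = fromBlocks 1 (A⁻¹ * B) 0 0 :=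
    one_sub_coarseCorrection_eq hA B C D
      (by rwa [← idealRestriction_mul_fromBlocks_mul_idealProlongation hA])
  have hY : (Es * Ec * Es) * (Es * Ec * Es) = (1 / 9 : ℂ) • (Es * Ec * Es) := by
    rw [hEs, hEc]
    exact mul_self_sandwich_eq_smul <|
      (isIdempotentElem_fromBlocks_one_zero _).mul_smoother_mul_smoother_mul
        (fromBlocks_one_zero_mul_mul_eq _ _)
  have hM : aeval M ((X - Polynomial.C 1) * (X - Polynomial.C (8 / 9 : ℂ))) = 0 := by
    simpa only [show (1 - 1 / 9 : ℂ) = 8 / 9 by norm_num] using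
      aeval_one_sub_eq_zero_of_mul_self_eq_smul hY
  exact ⟨spectrum_subset_pair_of_aeval_eq_zero hM, minpoly.dvd ℂ M hM,
    fun b x hx => mem_span_pair_of_aeval_eq_zero one_ne_zero (by norm_num) hM hx⟩

/-- For `m = 1` and `α = 2/3`, the symmetric two-level preconditioned operator
`M⁻¹Ã = I − E₁` has spectrum contained in `{1, 8/9}`, its minimal polynomial
divides `(x−1)(x−8/9)`, and GMRES converges in at most two iterations: the
solution of `M⁻¹Ã x = b` lies in the Krylov space `span{b, (M⁻¹Ã) b}`. -/
theorem two_level_m1_direct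
    {n p : Type*} [Fintype n] [Fintype p] [DecidableEq n] [DecidableEq p]
    [Nonempty (n ⊕ p)]
    (A : Matrix n n ℂ) (B : Matrix n p ℂ) (C : Matrix p n ℂ) (D : Matrix p p ℂ)
    (hA : IsUnit A.det) (hD : IsUnit D.det)
    (hAtil : IsUnit (Matrix.fromBlocks A B C D).det)
    (hT : ∃ (W : Matrix n n ℂ) (d : n → ℂ), IsUnit W.det ∧
      A⁻¹ * B * D⁻¹ * C = W * Matrix.diagonal d * W⁻¹)
    (hM₀ : IsUnit (Matrix.fromCols (-(C * A⁻¹)) (1 : Matrix p p ℂ) *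
        Matrix.fromBlocks A B C D *
        Matrix.fromRows (-(A⁻¹ * B)) (1 : Matrix p p ℂ)).det) :
    let Atil : Matrix (n ⊕ p) (n ⊕ p) ℂ := Matrix.fromBlocks A B C D
    let Sinv : Matrix (n ⊕ p) (n ⊕ p) ℂ := Matrix.fromBlocks A⁻¹ 0 0 D⁻¹
    let P : Matrix (n ⊕ p) p ℂ := Matrix.fromRows (-(A⁻¹ * B)) (1 : Matrix p p ℂ)
    let R : Matrix p (n ⊕ p) ℂ := Matrix.fromCols (-(C * A⁻¹)) (1 : Matrix p p ℂ)
    let M₀ : Matrix p p ℂ := R * Atil * P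
    let Es : Matrix (n ⊕ p) (n ⊕ p) ℂ :=
      (1 : Matrix (n ⊕ p) (n ⊕ p) ℂ) - (2 / 3 : ℂ) • (Sinv * Atil)
    let Ec : Matrix (n ⊕ p) (n ⊕ p) ℂ :=
      (1 : Matrix (n ⊕ p) (n ⊕ p) ℂ) - P * M₀⁻¹ * R * Atil
    let M : Matrix (n ⊕ p) (n ⊕ p) ℂ :=
      (1 : Matrix (n ⊕ p) (n ⊕ p) ℂ) - Es * Ec * Es
    spectrum ℂ M ⊆ {1, (8 / 9 : ℂ)} ∧
    minpoly ℂ M ∣ (X - Polynomial.C 1) * (X - Polynomial.C (8 / 9 : ℂ)) ∧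
    ∀ b x : (n ⊕ p) → ℂ, M.mulVec x = b →
      x ∈ Submodule.span ℂ {b, M.mulVec b} :=
  two_level_m1_direct_general A B C D hA hD hM₀
end
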